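/- arXiv:2112.06955 — 4 statements merged into one kernel-verified Lean document; each statement's English description precedes it below -/
import Mathlib

section
/- For every unit pure imaginary quaternion w, the map τ_w : Sℍ → S𝕍 defined by τ_w(q) = q⁻¹wq is surjective. -/
open Quaternion

def qmk (a b c d : ℝ) : ℍ[ℝ] := ⟨a, b, c, d⟩

@[simp] lemma qmk_re (a b c d : ℝ) : (qmk a b c d).re = a := rfl
@[simp] lemma qmk_imI (a b c d : ℝ) : (qmk a b c d).imI = b := rfl
@[simp] lemma qmk_imJ (a b c d : ℝ) : (qmk a b c d).imJ = c := rfl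
@[simp] lemma qmk_imK (a b c d : ℝ) : (qmk a b c d).imK = d := rfl

lemma aux_norm_one (x : ℍ[ℝ]) (h : normSq x = 1) : ‖x‖ = 1 := by
  nlinarith [Quaternion.normSq_eq_norm_mul_self x, norm_nonneg x]

lemma aux_normSq_one (w : ℍ[ℝ]) (hw1 : ‖w‖ = 1) : normSq w = 1 := by
  rw [Quaternion.normSq_eq_norm_mul_self, hw1, one_mul]

lemma aux_sq (w : ℍ[ℝ]) (hw : w.re = 0) (hw1 : ‖w‖ = 1) : w * w = -1 := by
  have h := aux_normSq_one w hw1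
  rw [Quaternion.normSq_def'] at h
  ext <;> simp [Quaternion.re_mul, Quaternion.imI_mul, Quaternion.imJ_mul,
    Quaternion.imK_mul, hw] <;> nlinarith [h]

lemma aux_anticomm (w q : ℍ[ℝ]) (hw : w.re = 0) (hq : q.re = 0)
    (hdot : w.imI * q.imI + w.imJ * q.imJ + w.imK * q.imK = 0) :
    w * q = -(q * w) := by
  ext <;> simp [Quaternion.re_mul, Quaternion.imI_mul, Quaternion.imJ_mul,
    Quaternion.imK_mul, hw, hq] <;> nlinarith [hdot]

lemma aux_inv (q : ℍ[ℝ]) (hq : q.re = 0) (hq1 : ‖q‖ = 1) : q⁻¹ = -q := by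
  have h := aux_sq q hq hq1
  exact inv_eq_of_mul_eq_one_right (by rw [mul_neg, h, neg_neg])

lemma aux_conj_neg (w q : ℍ[ℝ]) (hw : w.re = 0) (hw1 : ‖w‖ = 1)
    (hq : q.re = 0) (hq1 : ‖q‖ = 1)
    (hdot : w.imI * q.imI + w.imJ * q.imJ + w.imK * q.imK = 0) :
    q⁻¹ * w * q = -w := by
  have hqq := aux_sq q hq hq1
  have hac := aux_anticomm w q hw hq hdot
  have hac' : q * w = -(w * q) := by rw [hac, neg_neg]
  rw [aux_inv q hq hq1, neg_mul, neg_mul, neg_eq_iff_eq_neg, neg_neg, hac', neg_mul,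
    mul_assoc, hqq, mul_neg_one, neg_neg]

/-- For every unit pure imaginary quaternion `w`, the map `τ_w : Sℍ → S𝕍`,
`τ_w(q) = q⁻¹ w q`, is surjective: every unit pure imaginary quaternion `p` is of the form
`q⁻¹ w q` for some unit quaternion `q`. -/
theorem tau_w_surjective (w : ℍ[ℝ]) (hw : w.re = 0) (hw1 : ‖w‖ = 1)
    (p : ℍ[ℝ]) (hp : p.re = 0) (hp1 : ‖p‖ = 1) :
    ∃ q : ℍ[ℝ], ‖q‖ = 1 ∧ q⁻¹ * w * q = p := by
  by_cases h : w + p = 0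
  · -- p = -w : conjugate by a unit imaginary quaternion orthogonal to w
    have hpw : p = -w := eq_neg_of_add_eq_zero_right h
    have hns := aux_normSq_one w hw1
    rw [Quaternion.normSq_def'] at hns
    by_cases hs : w.imI ^ 2 + w.imJ ^ 2 = 0
    · have hI : w.imI = 0 := by nlinarith
      have hJ : w.imJ = 0 := by nlinarith
      refine ⟨qmk 0 1 0 0, aux_norm_one _ (by simp [Quaternion.normSq_def']), ?_⟩
      rw [hpw]
      exact aux_conj_neg w _ hw hw1 rfl (aux_norm_one _ (by simp [Quaternion.normSq_def']))
        (by simp [hI, hJ])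
    · set v : ℍ[ℝ] := qmk 0 (-w.imJ) w.imI 0 with hv
      have hvs : normSq v = w.imI ^ 2 + w.imJ ^ 2 := by
        simp [Quaternion.normSq_def', hv]; ring
      have hv0 : v ≠ 0 := by
        intro h0
        rw [h0, map_zero] at hvs
        exact hs hvs.symm
      have hvn : ‖v‖ ≠ 0 := norm_ne_zero_iff.mpr hv0
      refine ⟨‖v‖⁻¹ • v, ?_, ?_⟩
      · rw [norm_smul, norm_inv, norm_norm, inv_mul_cancel₀ hvn]
      · rw [hpw]
        refine aux_conj_neg w _ hw hw1 (by simp [hv]) ?_ ?_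
        · rw [norm_smul, norm_inv, norm_norm, inv_mul_cancel₀ hvn]
        · simp [hv]
          ring
  · set u : ℍ[ℝ] := w + p with hu
    have key : w * u = u * p := by
      rw [hu, mul_add, add_mul, aux_sq w hw hw1, aux_sq p hp hp1, add_comm]
    have hun : ‖u‖ ≠ 0 := norm_ne_zero_iff.mpr h
    refine ⟨‖u‖⁻¹ • u, ?_, ?_⟩
    · rw [norm_smul, norm_inv, norm_norm, inv_mul_cancel₀ hun]
    · have hu0 : u ≠ 0 := h
      rw [smul_inv₀, smul_mul_assoc, smul_mul_assoc, mul_smul_comm, smul_smul, inv_inv,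
        mul_inv_cancel₀ hun, one_smul, mul_assoc, key, ← mul_assoc,
        inv_mul_cancel₀ hu0, one_mul]
end

section
/- For a unit pure imaginary quaternion w and unit quaternions q₁, q₂, one has q₁⁻¹wq₁ = q₂⁻¹wq₂ if and only if q₂q₁⁻¹ = e^{wθ} = cos θ + w sin θ for some real θ. In particular, the fibre of τ_w over τ_w(q) is {e^{wθ}q : θ ∈ ℝ}. -/
open Quaternion

lemma normSq_one_of_norm_one (a : ℍ) (h : ‖a‖ = 1) : Quaternion.normSq a = 1 := by
  rw [Quaternion.normSq_eq_norm_mul_self, h, mul_one]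

lemma norm_one_of_normSq_one (a : ℍ) (h : Quaternion.normSq a = 1) : ‖a‖ = 1 := by
  have := Quaternion.normSq_eq_norm_mul_self a
  nlinarith [norm_nonneg a]

lemma comm_iff (w u : ℍ) (hw : w.re = 0) (hw1 : ‖w‖ = 1) (hu : ‖u‖ = 1) :
    u * w = w * u ↔ ∃ θ : ℝ, u = ((Real.cos θ : ℝ) : ℍ) + ((Real.sin θ : ℝ) : ℍ) * w := by
  have hwn : w.re ^ 2 + w.imI ^ 2 + w.imJ ^ 2 + w.imK ^ 2 = 1 := by
    rw [← Quaternion.normSq_def']; exact normSq_one_of_norm_one w hw1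
  have hwn' : w.imI ^ 2 + w.imJ ^ 2 + w.imK ^ 2 = 1 := by
    rw [hw] at hwn; simpa using hwn
  have hun : u.re ^ 2 + u.imI ^ 2 + u.imJ ^ 2 + u.imK ^ 2 = 1 := by
    rw [← Quaternion.normSq_def']; exact normSq_one_of_norm_one u hu
  constructor
  · intro h
    rw [Quaternion.ext_iff] at h
    simp only [Quaternion.re_mul, Quaternion.imI_mul, Quaternion.imJ_mul,
      Quaternion.imK_mul, hw] at h
    obtain ⟨_, h1, h2, h3⟩ := h
    have hI : u.imI = (u.imI * w.imI + u.imJ * w.imJ + u.imK * w.imK) * w.imI := by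
      linear_combination (-u.imI) * hwn' + (w.imJ / 2) * h3 - (w.imK / 2) * h2
    have hJ : u.imJ = (u.imI * w.imI + u.imJ * w.imJ + u.imK * w.imK) * w.imJ := by
      linear_combination (-u.imJ) * hwn' - (w.imI / 2) * h3 + (w.imK / 2) * h1
    have hK : u.imK = (u.imI * w.imI + u.imJ * w.imJ + u.imK * w.imK) * w.imK := by
      linear_combination (-u.imK) * hwn' + (w.imI / 2) * h2 - (w.imJ / 2) * h1
    set t : ℝ := u.imI * w.imI + u.imJ * w.imJ + u.imK * w.imK with ht
    have hsum : u.re ^ 2 + t ^ 2 = 1 := by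
      linear_combination hun - (u.imI + t * w.imI) * hI - (u.imJ + t * w.imJ) * hJ -
        (u.imK + t * w.imK) * hK - t ^ 2 * hwn'
    set z : ℂ := ⟨u.re, t⟩ with hz
    have habs : ‖z‖ = 1 := by
      rw [Complex.norm_def, Complex.normSq_mk,
        show u.re * u.re + t * t = u.re ^ 2 + t ^ 2 by ring, hsum, Real.sqrt_one]
    have hz0 : z ≠ 0 := by
      intro h0; rw [h0] at habs; simp at habs
    refine ⟨Complex.arg z, ?_⟩
    have hc : Real.cos (Complex.arg z) = u.re := by
      rw [Complex.cos_arg hz0, habs]; simp [hz]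
    have hs : Real.sin (Complex.arg z) = t := by
      rw [Complex.sin_arg, habs]; simp [hz]
    rw [hc, hs]
    ext <;> simp [hw, hI, hJ, hK]
  · rintro ⟨θ, rfl⟩
    ext <;>
      simp [Quaternion.re_mul, Quaternion.imI_mul, Quaternion.imJ_mul,
        Quaternion.imK_mul, hw] <;> ring

lemma norm_e (w : ℍ) (hw : w.re = 0) (hw1 : ‖w‖ = 1) (θ : ℝ) :
    ‖((Real.cos θ : ℝ) : ℍ) + ((Real.sin θ : ℝ) : ℍ) * w‖ = 1 := by
  have hwn : w.re ^ 2 + w.imI ^ 2 + w.imJ ^ 2 + w.imK ^ 2 = 1 := by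
    rw [← Quaternion.normSq_def']; exact normSq_one_of_norm_one w hw1
  apply norm_one_of_normSq_one
  rw [Quaternion.normSq_def']
  simp [Quaternion.re_mul, Quaternion.imI_mul, Quaternion.imJ_mul, Quaternion.imK_mul, hw]
  nlinarith [Real.sin_sq_add_cos_sq θ, hwn]

/-- For a unit pure imaginary quaternion `w` and unit quaternions `q₁`, `q₂`, one has
`q₁⁻¹ w q₁ = q₂⁻¹ w q₂` iff `q₂ q₁⁻¹ = e^{wθ} = cos θ + (sin θ) w` for some real `θ`.
In particular, the fibre of `τ_w` over `τ_w(q₁)` is `{e^{wθ} q₁ : θ ∈ ℝ}`. -/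
theorem tau_w_fibre (w q₁ q₂ : ℍ[ℝ]) (hw : w.re = 0) (hw1 : ‖w‖ = 1)
    (h₁ : ‖q₁‖ = 1) (h₂ : ‖q₂‖ = 1) :
    (q₁⁻¹ * w * q₁ = q₂⁻¹ * w * q₂ ↔
      ∃ θ : ℝ, q₂ * q₁⁻¹ = ((Real.cos θ : ℝ) : ℍ[ℝ]) + ((Real.sin θ : ℝ) : ℍ[ℝ]) * w) ∧
    {q : ℍ[ℝ] | ‖q‖ = 1 ∧ q⁻¹ * w * q = q₁⁻¹ * w * q₁}
      = {q : ℍ[ℝ] | ∃ θ : ℝ,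
          q = (((Real.cos θ : ℝ) : ℍ[ℝ]) + ((Real.sin θ : ℝ) : ℍ[ℝ]) * w) * q₁} := by
  have hq₁ : q₁ ≠ 0 := by intro h; rw [h] at h₁; simp at h₁
  have key : ∀ q : ℍ[ℝ], ‖q‖ = 1 →
      (q₁⁻¹ * w * q₁ = q⁻¹ * w * q ↔
        ∃ θ : ℝ, q * q₁⁻¹ = ((Real.cos θ : ℝ) : ℍ[ℝ]) + ((Real.sin θ : ℝ) : ℍ[ℝ]) * w) := by
    intro q hq
    have hq0 : q ≠ 0 := by intro h; rw [h] at hq; simp at hq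
    have hnu : ‖q * q₁⁻¹‖ = 1 := by rw [norm_mul, norm_inv, hq, h₁]; norm_num
    rw [← comm_iff w (q * q₁⁻¹) hw hw1 hnu]
    have e1 : q * (q₁⁻¹ * w * q₁) * q₁⁻¹ = q * q₁⁻¹ * w := by
      simp only [mul_assoc, mul_inv_cancel₀ hq₁, mul_one]
    have e2 : q * (q⁻¹ * w * q) * q₁⁻¹ = w * (q * q₁⁻¹) := by
      simp only [← mul_assoc, mul_inv_cancel₀ hq0, one_mul]
    have e3 : q⁻¹ * (q * q₁⁻¹ * w) * q₁ = q₁⁻¹ * w * q₁ := by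
      simp only [← mul_assoc, inv_mul_cancel₀ hq0, one_mul]
    have e4 : q⁻¹ * (w * (q * q₁⁻¹)) * q₁ = q⁻¹ * w * q := by
      simp only [mul_assoc, inv_mul_cancel₀ hq₁, mul_one]
    constructor
    · intro h
      rw [← e1, h, e2]
    · intro h
      rw [← e3, h, e4]
  refine ⟨key q₂ h₂, ?_⟩
  ext q
  simp only [Set.mem_setOf_eq]
  constructor
  · rintro ⟨hq, hτ⟩
    obtain ⟨θ, hθ⟩ := (key q hq).1 hτ.symm
    refine ⟨θ, ?_⟩
    rw [← hθ, mul_assoc, inv_mul_cancel₀ hq₁, mul_one]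
  · rintro ⟨θ, rfl⟩
    have hn := norm_e w hw hw1 θ
    have hqn : ‖(((Real.cos θ : ℝ) : ℍ[ℝ]) + ((Real.sin θ : ℝ) : ℍ[ℝ]) * w) * q₁‖ = 1 := by
      rw [norm_mul, hn, h₁, mul_one]
    refine ⟨hqn, ((key _ hqn).2 ⟨θ, ?_⟩).symm⟩
    rw [mul_assoc, mul_inv_cancel₀ hq₁, mul_one]
end

section
/- The map Φ : Sℍ → ST(S𝕍) defined by Φ(q) = (q⁻¹kq, q⁻¹jq) is well defined (its two components are orthogonal unit pure imaginary quaternions) and surjective, and Φ(q₁) = Φ(q₂) if and only if q₂ = ±q₁. -/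
open Quaternion

noncomputable def jq : ℍ[ℝ] := ⟨0, 0, 1, 0⟩
noncomputable def kq : ℍ[ℝ] := ⟨0, 0, 0, 1⟩

lemma re_mul_comm (x y : ℍ[ℝ]) : (x * y).re = (y * x).re := by
  simp only [Quaternion.re_mul]; ring

lemma star_of_pure {a : ℍ[ℝ]} (h : a.re = 0) : star a = -a := by
  ext <;> simp [h]

lemma sq_of_pure_unit {a : ℍ[ℝ]} (h0 : a.re = 0) (h1 : ‖a‖ = 1) : a * a = -1 := by
  have hs := Quaternion.star_mul_self a
  rw [star_of_pure h0, neg_mul] at hs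
  have hn : (normSq a : ℝ) = 1 := by
    rw [Quaternion.normSq_eq_norm_mul_self, h1, one_mul]
  rw [hn] at hs
  have := congrArg Neg.neg hs
  simpa using this

lemma norm_kq : ‖kq‖ = 1 := by
  have h : (normSq kq : ℝ) = 1 := by rw [Quaternion.normSq_def']; simp [kq]
  rw [Quaternion.normSq_eq_norm_mul_self] at h
  nlinarith [norm_nonneg kq]

lemma norm_jq : ‖jq‖ = 1 := by
  have h : (normSq jq : ℝ) = 1 := by rw [Quaternion.normSq_def']; simp [jq]
  rw [Quaternion.normSq_eq_norm_mul_self] at h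
  nlinarith [norm_nonneg jq]

lemma kq_re : kq.re = 0 := rfl
lemma jq_re : jq.re = 0 := rfl

lemma kj_anti : kq * jq + jq * kq = 0 := by
  ext <;> simp [Quaternion.re_mul, Quaternion.imI_mul, Quaternion.imJ_mul,
    Quaternion.imK_mul] <;> simp [kq, jq]

lemma jq_sq : jq * jq = -1 :=
  sq_of_pure_unit jq_re norm_jq

lemma kq_sq : kq * kq = -1 :=
  sq_of_pure_unit kq_re norm_kq

lemma qconj_mul {q : ℍ[ℝ]} (hq : q ≠ 0) (a b : ℍ[ℝ]) :
    (q⁻¹ * a * q) * (q⁻¹ * b * q) = q⁻¹ * (a * b) * q := by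
  simp only [mul_assoc]
  rw [← mul_assoc q q⁻¹, mul_inv_cancel₀ hq, one_mul]

lemma conj_conj (p r a : ℍ[ℝ]) :
    (p * r)⁻¹ * a * (p * r) = r⁻¹ * (p⁻¹ * a * p) * r := by
  rw [mul_inv_rev]; simp only [mul_assoc]

/-- Key algebraic lemma: if `a² = b² = -1` and `a + b ≠ 0`, then conjugation by `a+b`
sends `a` to `b`. -/
lemma conj_add {a b : ℍ[ℝ]} (ha : a * a = -1) (hb : b * b = -1) (hab : a + b ≠ 0) :
    (a + b)⁻¹ * a * (a + b) = b := by
  have key : a * (a + b) = (a + b) * b := by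
    rw [mul_add, add_mul, ha, hb, add_comm]
  rw [mul_assoc, key, ← mul_assoc, inv_mul_cancel₀ hab, one_mul]

lemma conj_smul (a q : ℍ[ℝ]) {t : ℝ} (ht : t ≠ 0) (hq : q ≠ 0) :
    (t • q)⁻¹ * a * (t • q) = q⁻¹ * a * q := by
  have hinv : (t • q)⁻¹ = t⁻¹ • q⁻¹ := by
    apply inv_eq_of_mul_eq_one_right
    rw [smul_mul_smul, mul_inv_cancel₀ ht, mul_inv_cancel₀ hq, one_smul]
  rw [hinv, smul_mul_assoc, smul_mul_assoc, mul_smul_comm, smul_smul,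
    inv_mul_cancel₀ ht, one_smul]

lemma intertwine {q₁ q₂ a b : ℍ[ℝ]} (h₁ : q₁ ≠ 0) (h₂ : q₂ ≠ 0)
    (h : q₁⁻¹ * a * q₁ = q₂⁻¹ * b * q₂) : a * (q₁ * q₂⁻¹) = (q₁ * q₂⁻¹) * b := by
  have e1 : q₁ * (q₁⁻¹ * a * q₁) * q₂⁻¹ = a * (q₁ * q₂⁻¹) := by
    simp only [← mul_assoc, mul_inv_cancel₀ h₁, one_mul]
  have e2 : q₁ * (q₂⁻¹ * b * q₂) * q₂⁻¹ = (q₁ * q₂⁻¹) * b := by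
    simp only [mul_assoc, mul_inv_cancel₀ h₂, mul_one]
  rw [← e1, ← e2, h]

/-- The map `Φ : Sℍ → ST(S𝕍)`, `Φ(q) = (q⁻¹ k q, q⁻¹ j q)`, is well defined (its two
components are orthogonal unit pure imaginary quaternions), surjective, and
`Φ(q₁) = Φ(q₂)` iff `q₂ = ±q₁`. -/
theorem Phi_well_defined_surjective_two_to_one :
    (∀ q : ℍ[ℝ], ‖q‖ = 1 →
      (q⁻¹ * kq * q).re = 0 ∧ ‖q⁻¹ * kq * q‖ = 1 ∧
      (q⁻¹ * jq * q).re = 0 ∧ ‖q⁻¹ * jq * q‖ = 1 ∧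
      (q⁻¹ * kq * q) * (q⁻¹ * jq * q) + (q⁻¹ * jq * q) * (q⁻¹ * kq * q) = 0) ∧
    (∀ u v : ℍ[ℝ], u.re = 0 → ‖u‖ = 1 → v.re = 0 → ‖v‖ = 1 → u * v + v * u = 0 →
      ∃ q : ℍ[ℝ], ‖q‖ = 1 ∧ q⁻¹ * kq * q = u ∧ q⁻¹ * jq * q = v) ∧
    (∀ q₁ q₂ : ℍ[ℝ], ‖q₁‖ = 1 → ‖q₂‖ = 1 →
      ((q₁⁻¹ * kq * q₁ = q₂⁻¹ * kq * q₂ ∧ q₁⁻¹ * jq * q₁ = q₂⁻¹ * jq * q₂) ↔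
        (q₂ = q₁ ∨ q₂ = -q₁))) := by
  refine ⟨?_, ?_, ?_⟩
  · -- well-definedness
    intro q hq
    have hq0 : q ≠ 0 := by intro h; rw [h, norm_zero] at hq; norm_num at hq
    have hre : ∀ a : ℍ[ℝ], (q⁻¹ * a * q).re = a.re := by
      intro a
      rw [mul_assoc, re_mul_comm, mul_assoc, mul_inv_cancel₀ hq0, mul_one]
    have hnorm : ∀ a : ℍ[ℝ], ‖q⁻¹ * a * q‖ = ‖a‖ := by
      intro a
      rw [norm_mul, norm_mul, norm_inv, hq]
      simp
    refine ⟨by rw [hre, kq_re], by rw [hnorm, norm_kq], by rw [hre, jq_re],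
      by rw [hnorm, norm_jq], ?_⟩
    rw [qconj_mul hq0, qconj_mul hq0, ← add_mul, ← mul_add, kj_anti, mul_zero, zero_mul]
  · -- surjectivity
    intro u v hu0 hu1 hv0 hv1 huv
    have hu2 : u * u = -1 := sq_of_pure_unit hu0 hu1
    have hv2 : v * v = -1 := sq_of_pure_unit hv0 hv1
    have hune : u ≠ 0 := by
      intro h; rw [h, norm_zero] at hu1; norm_num at hu1
    have huvc : u * v = -(v * u) := eq_neg_of_add_eq_zero_left huv
    -- Step 1: find p ≠ 0 with p⁻¹ kq p = u
    obtain ⟨p, hp0, hpk⟩ : ∃ p : ℍ[ℝ], p ≠ 0 ∧ p⁻¹ * kq * p = u := by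
      by_cases hcase : kq + u = 0
      · refine ⟨jq, ?_, ?_⟩
        · intro h
          have := jq_sq; rw [h, mul_zero] at this
          exact absurd this.symm (by norm_num)
        · have hu : u = -kq := eq_neg_of_add_eq_zero_right hcase
          have hji : jq⁻¹ = -jq := by
            rw [show jq⁻¹ = star jq from ?_, star_of_pure jq_re]
            apply (inv_eq_of_mul_eq_one_right ?_)
            rw [Quaternion.self_mul_star]
            have : (normSq jq : ℝ) = 1 := by rw [Quaternion.normSq_def']; simp [jq]
            rw [this]; exact_mod_cast rfl
          rw [hji, hu]
          ext <;> simp [Quaternion.re_mul, Quaternion.imI_mul, Quaternion.imJ_mul,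
            Quaternion.imK_mul] <;> simp [jq, kq]
      · exact ⟨kq + u, hcase, conj_add kq_sq hu2 hcase⟩
    set w : ℍ[ℝ] := p⁻¹ * jq * p with hw
    have hw2 : w * w = -1 := by
      rw [hw, qconj_mul hp0, jq_sq]
      simp [mul_assoc, inv_mul_cancel₀ hp0]
    have hwne : w ≠ 0 := by
      intro h; rw [h, mul_zero] at hw2; exact absurd hw2.symm (by norm_num)
    have huw : u * w = -(w * u) := by
      have : u * w + w * u = 0 := by
        rw [← hpk, hw, qconj_mul hp0, qconj_mul hp0, ← add_mul, ← mul_add, kj_anti,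
          mul_zero, zero_mul]
      exact eq_neg_of_add_eq_zero_left this
    -- Step 2: find r ≠ 0 with r⁻¹ w r = v and u r = r u
    obtain ⟨r, hr0, hrw, hru⟩ : ∃ r : ℍ[ℝ], r ≠ 0 ∧ r⁻¹ * w * r = v ∧ u * r = r * u := by
      by_cases hcase : w + v = 0
      · refine ⟨u, hune, ?_, rfl⟩
        have hwv : w = -v := eq_neg_of_add_eq_zero_left hcase
        have hui : u⁻¹ = -u := by
          rw [show u⁻¹ = star u from ?_, star_of_pure hu0]
          apply (inv_eq_of_mul_eq_one_right ?_)
          rw [Quaternion.self_mul_star]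
          have : (normSq u : ℝ) = 1 := by
            rw [Quaternion.normSq_eq_norm_mul_self, hu1, one_mul]
          rw [this]; exact_mod_cast rfl
        rw [hui, hwv]
        calc -u * -v * u = u * v * u := by rw [neg_mul_neg]
          _ = -(v * u) * u := by rw [huvc]
          _ = -(v * (u * u)) := by rw [neg_mul, mul_assoc]
          _ = v := by rw [hu2]; simp
      · refine ⟨w * (w + v), mul_ne_zero hwne hcase, ?_, ?_⟩
        · rw [mul_inv_rev]
          have : (w + v)⁻¹ * w⁻¹ * w * (w * (w + v))
              = (w + v)⁻¹ * w * (w + v) := by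
            simp only [mul_assoc, inv_mul_cancel₀ hwne]
            simp [mul_assoc]
          rw [this, conj_add hw2 hv2 hcase]
        · have hcomm : u * (w * v) = (w * v) * u := by
            calc u * (w * v) = (u * w) * v := (mul_assoc _ _ _).symm
              _ = -(w * u) * v := by rw [huw]
              _ = -(w * (u * v)) := by rw [neg_mul, mul_assoc]
              _ = -(w * -(v * u)) := by rw [huvc]
              _ = w * (v * u) := by rw [mul_neg, neg_neg]
              _ = (w * v) * u := (mul_assoc _ _ _).symm
          have hrform : w * (w + v) = -1 + w * v := by rw [mul_add, hw2]
          rw [hrform, mul_add, add_mul, hcomm, mul_neg_one, neg_one_mul]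
      -- end step 2
    have hq00 : p * r ≠ 0 := mul_ne_zero hp0 hr0
    have hc1 : (p * r)⁻¹ * kq * (p * r) = u := by
      rw [conj_conj, hpk, mul_assoc, hru, ← mul_assoc, inv_mul_cancel₀ hr0, one_mul]
    have hc2 : (p * r)⁻¹ * jq * (p * r) = v := by
      rw [conj_conj, ← hw, hrw]
    refine ⟨‖p * r‖⁻¹ • (p * r), ?_, ?_, ?_⟩
    · rw [norm_smul, norm_inv, norm_norm, inv_mul_cancel₀ (norm_ne_zero_iff.mpr hq00)]
    · rw [conj_smul kq (p * r) (inv_ne_zero (norm_ne_zero_iff.mpr hq00)) hq00, hc1]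
    · rw [conj_smul jq (p * r) (inv_ne_zero (norm_ne_zero_iff.mpr hq00)) hq00, hc2]
  · -- two-to-one
    intro q₁ q₂ h1 h2
    have h10 : q₁ ≠ 0 := by intro h; rw [h, norm_zero] at h1; norm_num at h1
    have h20 : q₂ ≠ 0 := by intro h; rw [h, norm_zero] at h2; norm_num at h2
    constructor
    · rintro ⟨hk, hj⟩
      set c : ℍ[ℝ] := q₁ * q₂⁻¹ with hc
      have hck : kq * c = c * kq := intertwine h10 h20 hk
      have hcj : jq * c = c * jq := intertwine h10 h20 hj
      have e1 := congrArg QuaternionAlgebra.imI hck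
      have e2 := congrArg QuaternionAlgebra.imJ hck
      have e3 := congrArg QuaternionAlgebra.imK hcj
      have e4 := congrArg QuaternionAlgebra.imI hcj
      have e5 := congrArg QuaternionAlgebra.imJ hcj
      have e6 := congrArg QuaternionAlgebra.imK hck
      simp only [Quaternion.imI_mul, Quaternion.imJ_mul, Quaternion.imK_mul]
        at e1 e2 e3 e4 e5 e6
      simp only [kq, jq] at e1 e2 e3 e4 e5 e6
      norm_num at e1 e2 e3 e4 e5 e6
      have hI : c.imI = 0 := by linarith
      have hJ : c.imJ = 0 := by linarith
      have hK : c.imK = 0 := by linarith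
      have hcre : c = ((c.re : ℝ) : ℍ[ℝ]) := by
        ext <;> simp [hI, hJ, hK]
      have hnc : ‖c‖ = 1 := by
        rw [hc, norm_mul, norm_inv, h1, h2]; norm_num
      have habs : |c.re| = 1 := by
        rw [hcre, Quaternion.norm_coe] at hnc
        simpa using hnc
      have hq1 : q₁ = c * q₂ := by
        rw [hc, mul_assoc, inv_mul_cancel₀ h20, mul_one]
      rcases abs_eq (by norm_num : (0:ℝ) ≤ 1) |>.mp habs with h | h
      · left
        rw [hq1, hcre, h, Quaternion.coe_one, one_mul]
      · right
        rw [hq1, hcre, h]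
        push_cast
        rw [neg_one_mul, neg_neg]
    · rintro (h | h)
      · rw [h]; exact ⟨rfl, rfl⟩
      · rw [h, inv_neg]
        constructor <;> · rw [neg_mul, neg_mul, mul_neg, neg_neg]
end

section
/- Under the map Φ(q) = (q⁻¹kq, q⁻¹jq), the image of e^{πi/c}q equals the rotation matrix [[cos(2π/c), sin(2π/c)], [-sin(2π/c), cos(2π/c)]] applied to the pair Φ(q) = (u, v); that is, Φ(e^{πi/c}q) = (cos(2π/c)u + sin(2π/c)v, -sin(2π/c)u + cos(2π/c)v). -/
open Quaternion

noncomputable def iq : ℍ[ℝ] := ⟨0, 1, 0, 0⟩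
/-- Under the map `Φ(q) = (q⁻¹kq, q⁻¹jq)`, the image of `e^{πi/c} q` equals the rotation
by `2π/c` applied to the pair `Φ(q) = (u, v)`. -/
theorem Phi_equivariant (c : ℕ) (hc : 1 ≤ c) (q : ℍ[ℝ]) (hq : ‖q‖ = 1)
    (e : ℍ[ℝ])
    (he : e = ((Real.cos (Real.pi / c) : ℝ) : ℍ[ℝ])
            + ((Real.sin (Real.pi / c) : ℝ) : ℍ[ℝ]) * iq) :
    (e * q)⁻¹ * kq * (e * q)
        = Real.cos (2 * Real.pi / c) • (q⁻¹ * kq * q)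
          + Real.sin (2 * Real.pi / c) • (q⁻¹ * jq * q) ∧
    (e * q)⁻¹ * jq * (e * q)
        = (-Real.sin (2 * Real.pi / c)) • (q⁻¹ * kq * q)
          + Real.cos (2 * Real.pi / c) • (q⁻¹ * jq * q) := by
  set θ := Real.pi / c with hθ
  have hcs : Real.cos θ ^ 2 + Real.sin θ ^ 2 = 1 := Real.cos_sq_add_sin_sq θ
  have hinv : e⁻¹ = ((Real.cos θ : ℝ) : ℍ[ℝ]) - ((Real.sin θ : ℝ) : ℍ[ℝ]) * iq := by
    apply inv_eq_of_mul_eq_one_right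
    subst he
    ext <;>
      simp [Quaternion.re_mul, Quaternion.imI_mul, Quaternion.imJ_mul,
        Quaternion.imK_mul] <;> simp [iq] <;> nlinarith [hcs]
  have h2 : 2 * Real.pi / c = 2 * θ := by rw [hθ]; ring
  have hk : e⁻¹ * kq * e = Real.cos (2 * θ) • kq + Real.sin (2 * θ) • jq := by
    rw [hinv, he]
    ext <;>
      simp [Real.cos_two_mul, Real.sin_two_mul, Quaternion.re_mul,
        Quaternion.imI_mul, Quaternion.imJ_mul, Quaternion.imK_mul] <;> simp [iq, jq, kq] <;> nlinarith [hcs]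
  have hj : e⁻¹ * jq * e = (-Real.sin (2 * θ)) • kq + Real.cos (2 * θ) • jq := by
    rw [hinv, he]
    ext <;>
      simp [Real.cos_two_mul, Real.sin_two_mul, Quaternion.re_mul,
        Quaternion.imI_mul, Quaternion.imJ_mul, Quaternion.imK_mul] <;> simp [iq, jq, kq] <;> nlinarith [hcs]
  have key : ∀ x : ℍ[ℝ], (e * q)⁻¹ * x * (e * q) = q⁻¹ * (e⁻¹ * x * e) * q := by
    intro x
    rw [mul_inv_rev]
    simp only [mul_assoc]
  rw [h2]
  constructor
  · rw [key, hk]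
    simp only [mul_add, add_mul, mul_smul_comm, smul_mul_assoc, mul_assoc]
  · rw [key, hj]
    simp only [mul_add, add_mul, mul_smul_comm, smul_mul_assoc, mul_assoc]
end
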